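/- Let $\mathcal{F} = \{\phi_i : i \in A\}$ be an IFS of contractions with positive Lipschitz constants over a complete metric space whose attractor $K$ is connected, has positive diameter, and such that $\mathcal{F}$ has no branching. Then for each $n$, the intersection graph $G_n$ — with vertex set $A^n$ and an edge between distinct $w,u \in A^n$ whenever $\phi_w(K) \cap \phi_u(K) \neq \emptyset$ — is a combinatorial arc (a path graph). -/

import Mathlib

open Set

/-- `φ_w = φ_{i₁} ∘ ⋯ ∘ φ_{iₙ}` for a word `w = i₁ ⋯ iₙ`. -/
noncomputable def compWord {X : Type*} {k : ℕ} (φ : Fin k → X → X)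
    (w : List (Fin k)) : X → X :=
  w.foldr (fun i g => φ i ∘ g) id

/-!
The intersection graph `G_n` is connected because `K` is connected and is covered by the finitely
many closed cylinders of level `n`, and it has maximum degree at most two by the no-branching
hypothesis. It also has a vertex of degree at most one: otherwise pick adjacent words `w, w'`, a
point `x` of `φ_w(K) ∩ φ_{w'}(K)` and words `a, b` of length `n` with `x ∈ φ_{wa}(K) ∩ φ_{w'b}(K)`;
if `a` had two neighbours `p, q` in `G_n`, the word `wa` would have the three neighbours `wp`,
`wq`, `w'b` in `G_{2n}`. A finite connected graph of maximum degree two with a vertex of degree at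
most one is a path, as one sees by deleting that vertex and inducting.
-/

namespace SimpleGraph

variable {V : Type*} {G : SimpleGraph V}

theorem eq_or_eq_or_eq_of_ncard_neighborSet_le_two [Finite V] {v a b c : V}
    (hv : (G.neighborSet v).ncard ≤ 2) (ha : G.Adj v a) (hb : G.Adj v b) (hc : G.Adj v c) :
    a = b ∨ a = c ∨ b = c := by
  by_contra! hne
  have hsub : ({a, b, c} : Set V) ⊆ G.neighborSet v := by
    rintro x (rfl | rfl | rfl)
    exacts [ha, hb, hc]
  have := ncard_le_ncard hsub
  rw [ncard_eq_three.mpr ⟨a, b, c, hne.1, hne.2.1, hne.2.2, rfl⟩] at this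
  omega

theorem ncard_neighborSet_induce_le [Finite V] (s : Set V) (v : s) :
    ((G.induce s).neighborSet v).ncard ≤ (G.neighborSet v).ncard :=
  ncard_le_ncard_of_injOn Subtype.val (fun _ h => h) Subtype.val_injective.injOn

theorem subsingleton_neighborSet_induce_compl [Finite V] {u z : V} (huz : G.Adj u z)
    (hz : (G.neighborSet z).ncard ≤ 2) :
    ((G.induce {u}ᶜ).neighborSet ⟨z, huz.ne'⟩).Subsingleton := by
  intro a ha b hb
  rcases eq_or_eq_or_eq_of_ncard_neighborSet_le_two hz huz.symm ha hb with h | h | h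
  exacts [(a.2 h.symm).elim, (b.2 h.symm).elim, Subtype.ext h]

theorem Connected.eq_of_neighborSet_eq_empty (hG : G.Connected) {u : V}
    (hu : G.neighborSet u = ∅) (v : V) : v = u := by
  obtain ⟨p⟩ := hG.preconnected u v
  cases p with
  | nil => rfl
  | cons h _ => exact absurd (show _ ∈ G.neighborSet u from h) (hu ▸ notMem_empty _)

theorem exists_iso_pathGraph_cons {N : ℕ} {u : V} (hu : (G.neighborSet u).Subsingleton)
    (e : pathGraph (N + 1) ≃g G.induce {u}ᶜ) (he : G.Adj u (e 0)) :
    ∃ f : pathGraph (N + 2) ≃g G, f 0 = u := by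
  classical
  set f : Fin (N + 2) ≃ V :=
    (finSuccEquiv (N + 1)).trans (e.toEquiv.optionCongr.trans (Equiv.optionSubtypeNe u))
  have f_zero : f 0 = u := rfl
  have f_succ : ∀ i, f i.succ = e i := fun _ => rfl
  clear_value f
  have adj_u : ∀ i, G.Adj u (e i) ↔ i = 0 := fun i =>
    ⟨fun h => e.injective (Subtype.ext (hu h he)), fun h => h ▸ he⟩
  have adj_iff : ∀ a b, G.Adj (f a) (f b) ↔ (pathGraph (N + 2)).Adj a b := by
    intro a b
    induction a using Fin.cases <;> induction b using Fin.cases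
    · simp [f_zero]
    · rw [f_zero, f_succ, adj_u, pathGraph_adj, Fin.ext_iff]; simp
    · rw [f_zero, f_succ, G.adj_comm, adj_u, pathGraph_adj, Fin.ext_iff]; simp
    · rw [f_succ, f_succ]; exact e.map_adj_iff.trans (by simp [pathGraph_adj])
  exact ⟨⟨f, adj_iff _ _⟩, f_zero⟩

theorem Connected.exists_iso_pathGraph [Finite V] (hG : G.Connected)
    (hdeg : ∀ v, (G.neighborSet v).ncard ≤ 2) {u : V} (hu : (G.neighborSet u).Subsingleton) :
    ∃ N, ∃ e : pathGraph (N + 1) ≃g G, e 0 = u := by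
  obtain ⟨m, hm⟩ : ∃ m, Nat.card V = m := ⟨_, rfl⟩
  induction m using Nat.strong_induction_on generalizing V with
  | _ m ih =>
    rcases (G.neighborSet u).eq_empty_or_nonempty with hu₀ | ⟨z, hz⟩
    · have eq_u := hG.eq_of_neighborSet_eq_empty hu₀
      refine ⟨0, ⟨⟨fun _ => u, fun _ => 0, fun i => (Fin.fin_one_eq_zero i).symm,
        fun v => (eq_u v).symm⟩, ?_⟩, rfl⟩
      simp
    · have hG' : (G.induce {u}ᶜ).Connected := by
        have := Fintype.ofFinite (G.neighborSet u)
        exact hG.induce_compl_singleton_of_degree_eq_one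
          (degree_eq_one_iff_existsUnique_adj.mpr ⟨z, hz, fun y hy => hu hy hz⟩)
      obtain ⟨N, e, he⟩ := ih _ (hm ▸ Finite.card_subtype_lt (x := u) (by simp)) hG'
        (fun v => (ncard_neighborSet_induce_le _ v).trans (hdeg v))
        (subsingleton_neighborSet_induce_compl hz (hdeg z)) rfl
      obtain ⟨f, hf⟩ := exists_iso_pathGraph_cons hu e (by rw [he]; exact hz)
      exact ⟨N + 1, f, hf⟩

def intersectionGraph {ι X : Type*} (C : ι → Set X) : SimpleGraph ι where
  Adj i j := i ≠ j ∧ (C i ∩ C j).Nonempty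
  symm := ⟨fun _ _ h => ⟨h.1.symm, inter_comm .. ▸ h.2⟩⟩
  loopless := ⟨fun _ h => h.1 rfl⟩

theorem intersectionGraph_adj {ι X : Type*} {C : ι → Set X} {i j : ι} :
    (intersectionGraph C).Adj i j ↔ i ≠ j ∧ (C i ∩ C j).Nonempty := Iff.rfl

theorem intersectionGraph_preconnected {ι X : Type*} [TopologicalSpace X] [Finite ι]
    {C : ι → Set X} (hcl : ∀ i, IsClosed (C i)) (hne : ∀ i, (C i).Nonempty)
    (hconn : IsPreconnected (⋃ i, C i)) : (intersectionGraph C).Preconnected := by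
  intro i j
  set T := {j | (intersectionGraph C).Reachable i j}
  have hdisj : Disjoint (⋃ l ∈ T, C l) (⋃ l ∈ Tᶜ, C l) := by
    refine Set.disjoint_left.mpr fun p hp hp' => ?_
    obtain ⟨l, hl, hpl⟩ := mem_iUnion₂.mp hp
    obtain ⟨l', hl', hpl'⟩ := mem_iUnion₂.mp hp'
    exact hl' (hl.trans (intersectionGraph_adj.mpr ⟨fun h : l = l' => hl' (h ▸ hl), p, hpl, hpl'⟩).reachable)
  have not_both : ∀ l, C l ⊆ ⋃ l ∈ T, C l → C l ⊆ ⋃ l ∈ Tᶜ, C l → False := fun l h h' =>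
    hdisj.ne_of_mem (h (hne l).some_mem) (h' (hne l).some_mem) rfl
  rcases (isPreconnected_iff_subset_of_fully_disjoint_closed (isClosed_iUnion_of_finite hcl)).mp
    hconn _ _ ((toFinite T).isClosed_biUnion fun l _ => hcl l)
    ((toFinite Tᶜ).isClosed_biUnion fun l _ => hcl l)
    (fun p hp => by
      obtain ⟨l, hpl⟩ := mem_iUnion.mp hp
      by_cases hl : l ∈ T
      exacts [Or.inl (mem_biUnion hl hpl), Or.inr (mem_biUnion hl hpl)]) hdisj with h | h
  · by_contra hj
    exact not_both j ((subset_iUnion C j).trans h) (subset_biUnion_of_mem (u := C) hj)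
  · exact (not_both i (subset_biUnion_of_mem (u := C) (Reachable.refl i))
      ((subset_iUnion C i).trans h)).elim

end SimpleGraph

theorem List.Vector.append_inj_iff {α : Type*} {n m : ℕ} {v v' : List.Vector α n}
    {a a' : List.Vector α m} : v ++ a = v' ++ a' ↔ v = v' ∧ a = a' := by
  refine ⟨fun h => ?_, fun ⟨hv, ha⟩ => hv ▸ ha ▸ rfl⟩
  have h' := congrArg List.Vector.toList h
  rw [toList_append, toList_append] at h'
  obtain ⟨hv, ha⟩ := List.append_inj h' (v.2.trans v'.2.symm)
  exact ⟨List.Vector.eq _ _ hv, List.Vector.eq _ _ ha⟩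

section IFS

open SimpleGraph

variable {X : Type*} {k : ℕ} {φ : Fin k → X → X} {K : Set X}

theorem compWord_append (φ : Fin k → X → X) (w u : List (Fin k)) :
    compWord φ (w ++ u) = compWord φ w ∘ compWord φ u := by
  induction w with
  | nil => rfl
  | cons i t ih => exact congrArg (φ i ∘ ·) ih

theorem continuous_compWord [TopologicalSpace X] (hφ : ∀ i, Continuous (φ i))
    (w : List (Fin k)) : Continuous (compWord φ w) := by
  induction w with
  | nil => exact continuous_id
  | cons i t ih => exact (hφ i).comp ih

theorem iUnion_compWord_image (hK : K = ⋃ i, φ i '' K) (m : ℕ) :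
    ⋃ w : List.Vector (Fin k) m, compWord φ w.toList '' K = K := by
  induction m with
  | zero =>
    have : Nonempty (List.Vector (Fin k) 0) := ⟨.nil⟩
    simp only [List.Vector.eq_nil, List.Vector.toList_nil, compWord, List.foldr_nil, image_id]
    exact iUnion_const K
  | succ m ih =>
    conv_rhs => rw [hK, ← ih]
    simp only [image_iUnion, ← image_comp]
    ext x
    simp only [mem_iUnion]
    constructor
    · rintro ⟨w, hw⟩
      rw [← w.cons_head_tail] at hw
      exact ⟨w.head, w.tail, hw⟩
    · rintro ⟨i, t, ht⟩
      exact ⟨i ::ᵥ t, ht⟩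

theorem exists_mem_compWord_image_append (hK : K = ⋃ i, φ i '' K) {n : ℕ}
    (v : List.Vector (Fin k) n) (m : ℕ) {x : X} (hx : x ∈ compWord φ v.toList '' K) :
    ∃ a : List.Vector (Fin k) m, x ∈ compWord φ (v ++ a).toList '' K := by
  rw [← iUnion_compWord_image hK m, image_iUnion] at hx
  obtain ⟨a, ha⟩ := mem_iUnion.mp hx
  exact ⟨a, by rwa [List.Vector.toList_append, compWord_append, image_comp]⟩

variable (φ K) in
def cylinderGraph (n : ℕ) : SimpleGraph (List.Vector (Fin k) n) :=
  intersectionGraph fun w => compWord φ w.toList '' K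

theorem cylinderGraph_adj_append {n m : ℕ} (v : List.Vector (Fin k) n)
    {a b : List.Vector (Fin k) m} (h : (cylinderGraph φ K m).Adj a b) :
    (cylinderGraph φ K (n + m)).Adj (v ++ a) (v ++ b) := by
  refine ⟨fun h' => h.1 (List.Vector.append_inj_iff.mp h').2, ?_⟩
  change (compWord φ (v ++ a).toList '' K ∩ compWord φ (v ++ b).toList '' K).Nonempty
  rw [List.Vector.toList_append, List.Vector.toList_append, compWord_append, compWord_append,
    image_comp, image_comp]
  exact (h.2.image _).mono (image_inter_subset _ _ _)

theorem ncard_neighborSet_cylinderGraph {m : ℕ} (w : List.Vector (Fin k) m) :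
    ((cylinderGraph φ K m).neighborSet w).ncard = {u : List (Fin k) | u.length = m ∧
      u ≠ w.toList ∧ (compWord φ u '' K ∩ compWord φ w.toList '' K).Nonempty}.ncard := by
  rw [← ncard_image_of_injective _ List.Vector.toList_injective]
  congr 1
  ext u
  constructor
  · rintro ⟨v, hv, rfl⟩
    exact ⟨v.2, fun h => hv.1 (List.Vector.eq _ _ h).symm, inter_comm .. ▸ hv.2⟩
  · rintro ⟨hu, hne, hint⟩
    exact ⟨⟨u, hu⟩, ⟨fun h => hne (congrArg List.Vector.toList h).symm, inter_comm .. ▸ hint⟩, rfl⟩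

theorem cylinderGraph_connected [TopologicalSpace X] [T2Space X] (hφ : ∀ i, Continuous (φ i))
    (hKc : IsCompact K) (hK : K = ⋃ i, φ i '' K) (hconn : IsConnected K) (n : ℕ) :
    (cylinderGraph φ K n).Connected := by
  have hcover := iUnion_compWord_image hK n
  obtain ⟨x, hx⟩ := hconn.nonempty
  rw [← hcover] at hx
  obtain ⟨w, -⟩ := mem_iUnion.mp hx
  have : Nonempty (List.Vector (Fin k) n) := ⟨w⟩
  exact ⟨intersectionGraph_preconnected
    (fun w => (hKc.image (continuous_compWord hφ _)).isClosed)
    (fun w => hconn.nonempty.image _) (by rw [hcover]; exact hconn.isPreconnected)⟩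

theorem exists_subsingleton_neighborSet_cylinderGraph (hK : K = ⋃ i, φ i '' K) {n : ℕ}
    [Nonempty (List.Vector (Fin k) n)]
    (hdeg : ∀ w, ((cylinderGraph φ K (n + n)).neighborSet w).ncard ≤ 2) :
    ∃ u, ((cylinderGraph φ K n).neighborSet u).Subsingleton := by
  by_contra! h
  obtain ⟨w⟩ := ‹Nonempty (List.Vector (Fin k) n)›
  obtain ⟨w', hw', -⟩ := h w
  obtain ⟨x, hx, hx'⟩ := hw'.2
  obtain ⟨a, ha⟩ := exists_mem_compWord_image_append hK _ n hx
  obtain ⟨b, hb⟩ := exists_mem_compWord_image_append hK w' n hx'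
  obtain ⟨p, hp, q, hq, hpq⟩ := h a
  have hb_adj : (cylinderGraph φ K (n + n)).Adj (w ++ a) (w' ++ b) :=
    ⟨fun h => hw'.1 (List.Vector.append_inj_iff.mp h).1, x, ha, hb⟩
  rcases eq_or_eq_or_eq_of_ncard_neighborSet_le_two (hdeg _) (cylinderGraph_adj_append _ hp)
    (cylinderGraph_adj_append _ hq) hb_adj with h | h | h
  · exact hpq (List.Vector.append_inj_iff.mp h).2
  all_goals exact hw'.1 (List.Vector.append_inj_iff.mp h).1

end IFS

theorem stmt11_general {X : Type*} [MetricSpace X] {k : ℕ}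
    (φ : Fin k → X → X) (L : Fin k → ℝ)
    (hL : ∀ i, 0 < L i ∧ L i < 1)
    (hLip : ∀ i x y, dist (φ i x) (φ i y) ≤ L i * dist x y)
    (K : Set X) (hKc : IsCompact K)
    (hK : K = ⋃ i, φ i '' K) (hconn : IsConnected K)
    (hnb : ∀ (n : ℕ) (w : List (Fin k)), w.length = n →
      {u : List (Fin k) | u.length = n ∧ u ≠ w ∧
        (compWord φ u '' K ∩ compWord φ w '' K).Nonempty}.ncard ≤ 2)
    (n : ℕ) :
    ∃ (N : ℕ) (e : Fin N → {w : List (Fin k) // w.length = n}),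
      Function.Bijective e ∧
      ∀ i j : Fin N,
        ((e i).1 ≠ (e j).1 ∧
          (compWord φ (e i).1 '' K ∩ compWord φ (e j).1 '' K).Nonempty)
        ↔ ((i : ℕ) + 1 = j ∨ (j : ℕ) + 1 = i) := by
  have hφ : ∀ i, Continuous (φ i) := fun i =>
    (LipschitzWith.of_dist_le_mul fun x y => by
      rw [Real.coe_toNNReal _ (hL i).1.le]; exact hLip i x y).continuous
  have hdeg : ∀ m (w : List.Vector (Fin k) m), ((cylinderGraph φ K m).neighborSet w).ncard ≤ 2 :=
    fun m w => ncard_neighborSet_cylinderGraph w ▸ hnb m w.toList w.2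
  have hG := cylinderGraph_connected hφ hKc hK hconn n
  have := hG.nonempty
  obtain ⟨u, hu⟩ := exists_subsingleton_neighborSet_cylinderGraph hK (hdeg (n + n))
  obtain ⟨N, e, -⟩ := hG.exists_iso_pathGraph (hdeg n) hu
  refine ⟨N + 1, e, e.bijective, fun i j => ?_⟩
  rw [← SimpleGraph.pathGraph_adj, ← e.map_adj_iff]
  exact Iff.and List.Vector.toList_injective.ne_iff Iff.rfl

/-- For an IFS with connected attractor of positive diameter and no branching, each
intersection graph `G_n` is a combinatorial arc: the length-`n` words can be enumerated so
that two cylinders intersect exactly when they are consecutive in the enumeration. -/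
theorem stmt11 {X : Type*} [MetricSpace X] [CompleteSpace X] {k : ℕ}
    (φ : Fin k → X → X) (L : Fin k → ℝ)
    (hL : ∀ i, 0 < L i ∧ L i < 1)
    (hLip : ∀ i x y, dist (φ i x) (φ i y) ≤ L i * dist x y)
    (K : Set X) (hKne : K.Nonempty) (hKc : IsCompact K)
    (hK : K = ⋃ i, φ i '' K) (hconn : IsConnected K)
    (hdiam : 0 < Metric.diam K)
    (hnb : ∀ (n : ℕ) (w : List (Fin k)), w.length = n →
      {u : List (Fin k) | u.length = n ∧ u ≠ w ∧
        (compWord φ u '' K ∩ compWord φ w '' K).Nonempty}.ncard ≤ 2)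
    (n : ℕ) (hn : 1 ≤ n) :
    ∃ (N : ℕ) (e : Fin N → {w : List (Fin k) // w.length = n}),
      Function.Bijective e ∧
      ∀ i j : Fin N,
        ((e i).1 ≠ (e j).1 ∧
          (compWord φ (e i).1 '' K ∩ compWord φ (e j).1 '' K).Nonempty)
        ↔ ((i : ℕ) + 1 = j ∨ (j : ℕ) + 1 = i) :=
  stmt11_general φ L hL hLip K hKc hK hconn hnb n
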